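/- arXiv:2106.01996 — 6 statements merged into one kernel-verified Lean document; each statement's English description precedes it below -/
import Mathlib

section
/- Let δ be a p-derivation on a commutative ring R and a an ideal of R containing p. Then for every natural number k, δ maps a^{k+1} into a^k. -/
/-! Induct on `k`. Since `a ^ (k + 2) = a ^ (k + 1) * a` is additively generated by products
`m * n` with `m ∈ a ^ (k + 1)` and `n ∈ a`, it suffices to control `δ` on such products and on
sums. For products, each of the three terms of `δ (m * n)` picks up a factor from `a ^ (k + 1)`:
`m ^ p` directly, and `n ^ p * δ m`, `p * δ m * δ n` through `δ m ∈ a ^ k` together with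
`n, p ∈ a`. For sums, the correction term `cp p x y` is divisible by `x`. -/

/-- The integer polynomial `C_p` evaluated in a commutative ring. -/
def cp {R : Type*} [CommRing R] (p : ℕ) (x y : R) : R :=
  -∑ i ∈ Finset.Ioo 0 p, ((p.choose i / p : ℕ) : R) * x ^ i * y ^ (p - i)

/-- A `p`-derivation on a commutative ring `R`. -/
def IsPDerivation {R : Type*} [CommRing R] (p : ℕ) (δ : R → R) : Prop :=
  δ 0 = 0 ∧ δ 1 = 0 ∧
    (∀ x y : R, δ (x + y) = δ x + δ y + cp p x y) ∧
    (∀ x y : R, δ (x * y) = x ^ p * δ y + y ^ p * δ x + (p : R) * δ x * δ y)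

lemma cp_mem_of_left_mem {R : Type*} [CommRing R] (p : ℕ) {I : Ideal R} {x : R}
    (hx : x ∈ I) (y : R) : cp p x y ∈ I := by
  refine neg_mem (I.sum_mem fun i hi => I.mul_mem_right _ (I.mul_mem_left _ ?_))
  exact I.pow_mem_of_mem hx i (Finset.mem_Ioo.mp hi).1

namespace IsPDerivation

variable {R : Type*} [CommRing R] {p : ℕ} {δ : R → R}

lemma map_add_mem (hδ : IsPDerivation p δ) {I : Ideal R} {x y : R} (hx : x ∈ I)
    (hδx : δ x ∈ I) (hδy : δ y ∈ I) : δ (x + y) ∈ I := by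
  rw [hδ.2.2.1 x y]
  exact add_mem (add_mem hδx hδy) (cp_mem_of_left_mem p hx y)

lemma map_mul_mem_pow_succ (hδ : IsPDerivation p δ) (hp : 0 < p) {a : Ideal R}
    (hpa : (p : R) ∈ a) {k : ℕ} {m n : R} (hm : m ∈ a ^ (k + 1)) (hδm : δ m ∈ a ^ k)
    (hn : n ∈ a) : δ (m * n) ∈ a ^ (k + 1) := by
  have hnδm : n ^ p * δ m ∈ a ^ (k + 1) := by
    rw [pow_succ']
    exact Ideal.mul_mem_mul (a.pow_mem_of_mem hn p hp) hδm
  have hpδm : (p : R) * δ m ∈ a ^ (k + 1) := by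
    rw [pow_succ']
    exact Ideal.mul_mem_mul hpa hδm
  rw [hδ.2.2.2 m n]
  exact add_mem (add_mem (Ideal.mul_mem_right _ _ ((a ^ (k + 1)).pow_mem_of_mem hm p hp))
    hnδm) (Ideal.mul_mem_right _ _ hpδm)

end IsPDerivation

theorem pDerivation_map_pow_succ {R : Type*} [CommRing R] (p : ℕ)
    (hp : p.Prime) (δ : R → R) (hδ : IsPDerivation p δ)
    (a : Ideal R) (hpa : (p : R) ∈ a) (k : ℕ) :
    ∀ x ∈ a ^ (k + 1), δ x ∈ a ^ k := by
  induction k with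
  | zero => simp [Ideal.one_eq_top]
  | succ k ih =>
    intro x hx
    rw [pow_succ] at hx
    induction hx using Submodule.mul_induction_on' with
    | mem_mul_mem m hm n hn => exact hδ.map_mul_mem_pow_succ hp.pos hpa hm (ih m hm) hn
    | add x hx y _ hδx hδy => exact hδ.map_add_mem (Ideal.mul_le_left hx) hδx hδy
end

section
/- For any commutative ring R, prime integer p, and elements x, y ∈ R, one has (x+y)^{p^2} + p·C_p(x,y)^p ≡ x^{p^2} + y^{p^2} modulo p^2 R, where C_p(x,y) = -\sum_{i=1}^{p-1} (binom(p,i)/p) x^i y^{p-i}. -/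
theorem map_cp {R S : Type*} [CommRing R] [CommRing S] (f : R →+* S) (p : ℕ) (x y : R) :
    f (cp p x y) = cp p (f x) (f y) := by
  simp [cp, map_sum, map_mul, map_pow, map_natCast]

theorem add_pow_prime_eq_sub_cp {R : Type*} [CommRing R] {p : ℕ} (hp : p.Prime) (x y : R) :
    (x + y) ^ p = x ^ p + y ^ p - p * cp p x y := by
  rw [add_pow_prime_eq' hp, cp, mul_neg, sub_neg_eq_add, Finset.mul_sum, Finset.mul_sum]
  congr 1
  exact Finset.sum_congr rfl fun _ _ => by ring

theorem cp_pow_charP {S : Type*} [CommRing S] {p : ℕ} [Fact p.Prime] [CharP S p] (x y : S) :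
    cp p x y ^ p = cp p (x ^ p) (y ^ p) :=
  map_cp (frobenius S p) p x y

theorem natCast_dvd_cp_pow_sub_cp_pow {R : Type*} [CommRing R] {p : ℕ} (hp : p.Prime)
    (x y : R) : (p : R) ∣ cp p x y ^ p - cp p (x ^ p) (y ^ p) := by
  by_cases hu : IsUnit (p : R)
  · exact hu.dvd
  have : Fact p.Prime := ⟨hp⟩
  have := CharP.quotient R p hu
  rw [← Ideal.mem_span_singleton, ← Ideal.Quotient.eq, map_pow, map_cp, map_cp, map_pow,
    map_pow, cp_pow_charP]

theorem pow_p_sq_add_cp_pow {R : Type*} [CommRing R] (p : ℕ) (hp : p.Prime)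
    (x y : R) :
    (x + y) ^ p ^ 2 + (p : R) * cp p x y ^ p - (x ^ p ^ 2 + y ^ p ^ 2) ∈
      Ideal.span {((p : R)) ^ 2} := by
  rw [Ideal.mem_span_singleton]
  have hfirst : (p : R) ∣ (x + y) ^ p - (x ^ p + y ^ p) :=
    ⟨-cp p x y, by rw [add_pow_prime_eq_sub_cp hp]; ring⟩
  have hsecond : (p : R) ^ 2 ∣ ((x + y) ^ p) ^ p - (x ^ p + y ^ p) ^ p := by
    simpa using dvd_sub_pow_of_dvd_sub hfirst 1
  have hfrob : (p : R) ^ 2 ∣ p * (cp p x y ^ p - cp p (x ^ p) (y ^ p)) := by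
    rw [sq]
    exact mul_dvd_mul_left _ (natCast_dvd_cp_pow_sub_cp_pow hp x y)
  have hsplit : (x + y) ^ p ^ 2 + (p : R) * cp p x y ^ p - (x ^ p ^ 2 + y ^ p ^ 2) =
      (((x + y) ^ p) ^ p - (x ^ p + y ^ p) ^ p) +
        p * (cp p x y ^ p - cp p (x ^ p) (y ^ p)) := by
    rw [add_pow_prime_eq_sub_cp hp (x ^ p), ← pow_mul, ← pow_mul, ← pow_mul, ← sq]
    ring
  rw [hsplit]
  exact dvd_add hsecond hfrob
end

section
/- For a prime p and integers 0 ≤ m ≤ n, the congruence binom(pn, pm) ≡ binom(n, m) holds modulo p^2. -/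
/-!
In `ℤ[X]` write `(X + 1) ^ p = (X ^ p + 1) + p E`, where `E` has no monomials `X ^ (p k)`
(`contract p E = 0`).
Raising to the `n`-th power, `(X + 1) ^ (p n) ≡ (X ^ p + 1) ^ n + n p E (X ^ p + 1) ^ (n - 1)`
modulo `p ^ 2`. The cross term has no monomials `X ^ (p m)` either, so comparing coefficients
of `X ^ (p m)` gives `(p n).choose (p m) ≡ n.choose m [ZMOD p ^ 2]`.
-/

open Polynomial Finset

theorem exists_X_add_one_pow_eq {R : Type*} [CommSemiring R] {p : ℕ} (hp : p.Prime) :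
    ∃ E : R[X], (X + 1) ^ p = X ^ p + 1 + C (p : R) * E ∧ contract p E = 0 := by
  refine ⟨∑ k ∈ Ioo 0 p, monomial k ((p.choose k / p : ℕ) : R), ?_, ?_⟩
  · ext k
    simp only [coeff_X_add_one_pow, coeff_add, coeff_X_pow, coeff_one, coeff_C_mul,
      finsetSum_coeff, coeff_monomial, sum_ite_eq', mem_Ioo]
    rcases Nat.eq_zero_or_pos k with rfl | hk0
    · simp [hp.ne_zero.symm]
    rcases lt_trichotomy k p with hkp | rfl | hkp
    · simp only [hkp.ne, hk0.ne', hk0, hkp, if_false, if_true, and_self, zero_add, ← Nat.cast_mul,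
        Nat.mul_div_cancel' (hp.dvd_choose_self hk0.ne' hkp)]
    · simp [hk0.ne']
    · simp [Nat.choose_eq_zero_of_lt hkp, hkp.ne', hk0.ne', hkp.not_gt]
  · ext n
    simp only [coeff_contract hp.ne_zero, finsetSum_coeff, coeff_monomial, sum_ite_eq', mem_Ioo,
      coeff_zero, ite_eq_right_iff, and_imp]
    intro h0 hlt
    exact (hlt.not_ge (Nat.le_mul_of_pos_left p (Nat.pos_of_mul_pos_right h0))).elim

theorem coeff_mul_expand_of_contract_eq_zero {R : Type*} [CommSemiring R] {p : ℕ} (hp : p ≠ 0)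
    {E : R[X]} (hE : contract p E = 0) (g : R[X]) (m : ℕ) :
    (E * expand R p g).coeff (p * m) = 0 := by
  rw [mul_comm p, ← coeff_contract hp, contract_mul_expand hp, hE, zero_mul, coeff_zero]

theorem sq_dvd_coeff_expand_add_C_mul_pow_sub {R : Type*} [CommRing R] {p : ℕ} (hp : p ≠ 0)
    {E : R[X]} (hE : contract p E = 0) (g : R[X]) (a : R) (n m : ℕ) :
    a ^ 2 ∣ ((expand R p g + C a * E) ^ n).coeff (p * m) - (g ^ n).coeff m := by
  obtain ⟨q, hq⟩ := sq_dvd_add_pow_sub_sub (C a * E) (expand R p g) n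
  have hpow : (expand R p g + C a * E) ^ n = expand R p (g ^ n)
      + C (a * n) * (E * expand R p (g ^ (n - 1))) + C (a ^ 2) * (E ^ 2 * q) := by
    simp only [map_pow, map_mul, map_natCast]
    linear_combination hq
  refine ⟨(E ^ 2 * q).coeff (p * m), ?_⟩
  rw [hpow, coeff_add, coeff_add, coeff_C_mul, coeff_C_mul,
    coeff_mul_expand_of_contract_eq_zero hp hE, coeff_expand_mul' (Nat.pos_of_ne_zero hp)]
  ring

theorem choose_mul_prime_mod_sq_general (p : ℕ) (hp : p.Prime) (m n : ℕ) :
    (((p * n).choose (p * m) : ℤ)) ≡ ((n.choose m : ℕ) : ℤ) [ZMOD ((p : ℤ) ^ 2)] := by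
  obtain ⟨E, hE, hEc⟩ := exists_X_add_one_pow_eq (R := ℤ) hp
  have h := sq_dvd_coeff_expand_add_C_mul_pow_sub hp.ne_zero hEc (X + 1) (p : ℤ) n m
  rw [map_add, expand_X, map_one, ← hE, ← pow_mul, coeff_X_add_one_pow,
    coeff_X_add_one_pow] at h
  exact (Int.modEq_iff_dvd.mpr h).symm

theorem choose_mul_prime_mod_sq (p : ℕ) (hp : p.Prime) (m n : ℕ) (hmn : m ≤ n) :
    (((p * n).choose (p * m) : ℤ)) ≡ ((n.choose m : ℕ) : ℤ) [ZMOD ((p : ℤ) ^ 2)] :=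
  choose_mul_prime_mod_sq_general p hp m n
end

section
/- Let p be a prime, R a commutative ring, and α : R → M a perivation into an R/pR-module M. Then for every integer n, α(n) = ((n - n^p)/p) · α(p), where (n-n^p)/p is the integer guaranteed by Fermat's little theorem. In other words, every perivation restricts trivially to Z. -/
/-- A perivation from `R` to an `R/pR`-module `M`. -/
def IsPerivation {R M : Type*} [CommRing R] [AddCommGroup M] [Module R M]
    (p : ℕ) (α : R → M) : Prop :=
  α 0 = 0 ∧ α 1 = 0 ∧
    (∀ x y : R, α (x + y) = α x + α y + cp p x y • α (p : R)) ∧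
    (∀ x y : R, α (x * y) = x ^ p • α y + y ^ p • α x)

theorem natCast_mul_cp {R : Type*} [CommRing R] {p : ℕ} (hp : p.Prime) (x y : R) :
    (p : R) * cp p x y = x ^ p + y ^ p - (x + y) ^ p := by
  have hsplit : Finset.range (p + 1) = insert 0 (insert p (Finset.Ioo 0 p)) := by
    ext i
    simp only [Finset.mem_range, Finset.mem_insert, Finset.mem_Ioo]
    omega
  have h0 : 0 ∉ insert p (Finset.Ioo 0 p) := by simp [hp.ne_zero.symm]
  rw [add_pow, hsplit, Finset.sum_insert h0, Finset.sum_insert (by simp), cp, mul_neg,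
    Finset.mul_sum]
  have hterm : ∀ i ∈ Finset.Ioo 0 p,
      (p : R) * (((p.choose i / p : ℕ) : R) * x ^ i * y ^ (p - i)) =
        x ^ i * y ^ (p - i) * (p.choose i : R) := by
    intro i hi
    rw [Finset.mem_Ioo] at hi
    rw [← mul_assoc, ← mul_assoc, ← Nat.cast_mul,
      Nat.mul_div_cancel' (hp.dvd_choose_self hi.1.ne' hi.2)]
    ring
  rw [Finset.sum_congr rfl hterm]
  simp only [pow_zero, tsub_zero, one_mul, Nat.choose_zero_right, Nat.cast_one, mul_one,
    tsub_self, Nat.choose_self]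
  ring

theorem Int.prime_dvd_sub_pow {p : ℕ} (hp : p.Prime) (n : ℤ) : (p : ℤ) ∣ n - n ^ p := by
  have := Fact.mk hp
  rw [← ZMod.intCast_zmod_eq_zero_iff_dvd]
  push_cast
  rw [ZMod.pow_card, sub_self]

theorem Int.fermat_quotient_add_one {p : ℕ} (hp : p.Prime) (m : ℤ) :
    (m + 1 - (m + 1) ^ p) / p = (m - m ^ p) / p + cp p m 1 := by
  have hp0 : (p : ℤ) ≠ 0 := by exact_mod_cast hp.ne_zero
  apply mul_left_cancel₀ hp0
  rw [Int.mul_ediv_cancel' (Int.prime_dvd_sub_pow hp _), mul_add,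
    Int.mul_ediv_cancel' (Int.prime_dvd_sub_pow hp _), natCast_mul_cp hp]
  ring

namespace IsPerivation

variable {R M : Type*} [CommRing R] [AddCommGroup M] [Module R M] {p : ℕ} {α : R → M}

theorem map_add_one (hα : IsPerivation p α) (x : R) : α (x + 1) = α x + cp p x 1 • α p := by
  rw [hα.2.2.1, hα.2.1, add_zero]

theorem map_intCast_add_one (hα : IsPerivation p α) (m : ℤ) :
    α ((m + 1 : ℤ) : R) = α (m : R) + cp p m 1 • α p := by
  have hcast : ((cp p m 1 : ℤ) : R) = cp p (m : R) 1 := by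
    simpa using map_cp (Int.castRingHom R) p m 1
  rw [Int.cast_add, Int.cast_one, hα.map_add_one, ← hcast, Int.cast_smul_eq_zsmul]

end IsPerivation

theorem perivation_int_general {R M : Type*} [CommRing R] [AddCommGroup M] [Module R M]
    (p : ℕ) (hp : p.Prime)
    (α : R → M) (hα : IsPerivation p α) (n : ℤ) :
    α ((n : R)) = (((n - n ^ p) / (p : ℤ)) : ℤ) • α ((p : R)) := by
  set defect : ℤ → M := fun m => α (m : R) - ((m - m ^ p) / (p : ℤ)) • α (p : R)
  have hperiodic : Function.Periodic defect 1 := fun m => by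
    simp only [defect, hα.map_intCast_add_one, Int.fermat_quotient_add_one hp, add_smul]
    abel
  have hzero : defect 0 = 0 := by
    simp [defect, hα.1, zero_pow hp.ne_zero]
  have h := hperiodic.int_mul_eq n
  rwa [mul_one, hzero, sub_eq_zero] at h

theorem perivation_int {R M : Type*} [CommRing R] [AddCommGroup M] [Module R M]
    (p : ℕ) (hp : p.Prime) (hM : ∀ m : M, (p : R) • m = 0)
    (α : R → M) (hα : IsPerivation p α) (n : ℤ) :
    α ((n : R)) = (((n - n ^ p) / (p : ℤ)) : ℤ) • α ((p : R)) :=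
  perivation_int_general p hp α hα n
end

section
/- Let p be a prime, R a commutative ring, I an ideal of R, M an R/pR-module, and α : R → M a perivation with α(I) ⊆ IM. Then α descends to a well-defined perivation α' : R/I → M/IM, i.e., α(r) mod IM depends only on r mod I, and the induced map satisfies the perivation axioms. -/
/-- Every monomial of `C_p(x, a)` has positive degree in `a`. -/
theorem cp_mem_of_mem_right {R : Type*} [CommRing R] (p : ℕ) {I : Ideal R} (x : R) {a : R}
    (ha : a ∈ I) : cp p x a ∈ I := by
  refine I.neg_mem (I.sum_mem fun i hi => ?_)
  have hi_lt : i < p := (Finset.mem_Ioo.mp hi).2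
  exact I.mul_mem_left _ (I.pow_mem_of_mem ha _ (Nat.sub_pos_of_lt hi_lt))

namespace IsPerivation

variable {R M : Type*} [CommRing R] [AddCommGroup M] [Module R M] {p : ℕ} {α : R → M}

theorem sub_mem_smul_top (hα : IsPerivation p α) {I : Ideal R}
    (hI : ∀ a ∈ I, α a ∈ I • (⊤ : Submodule R M)) {r s : R} (hrs : r - s ∈ I) :
    α r - α s ∈ I • (⊤ : Submodule R M) := by
  have hsplit : α r - α s = α (r - s) + cp p s (r - s) • α (p : R) := by
    conv_lhs => rw [← add_sub_cancel s r, hα.2.2.1 s (r - s)]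
    abel
  rw [hsplit]
  exact add_mem (hI _ hrs) (Submodule.smul_mem_smul (cp_mem_of_mem_right p s hrs) trivial)

def descend (hα : IsPerivation p α) (I : Ideal R)
    (hI : ∀ a ∈ I, α a ∈ I • (⊤ : Submodule R M)) : R ⧸ I → M ⧸ I • (⊤ : Submodule R M) :=
  Quotient.lift (fun r => Submodule.Quotient.mk (α r)) fun _ _ hrs =>
    (Submodule.Quotient.eq _).mpr
      (hα.sub_mem_smul_top hI (Submodule.quotientRel_def _ |>.mp hrs))

@[simp]
theorem descend_mk (hα : IsPerivation p α) (I : Ideal R)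
    (hI : ∀ a ∈ I, α a ∈ I • (⊤ : Submodule R M)) (r : R) :
    hα.descend I hI (Ideal.Quotient.mk I r) = Submodule.Quotient.mk (α r) :=
  rfl

end IsPerivation

theorem perivation_descends_general {R M : Type*} [CommRing R] [AddCommGroup M] [Module R M]
    (p : ℕ)
    (α : R → M) (hα : IsPerivation p α) (I : Ideal R)
    (hI : ∀ a ∈ I, α a ∈ I • (⊤ : Submodule R M)) :
    ∃ α' : R ⧸ I → M ⧸ (I • (⊤ : Submodule R M)),
      (∀ r : R, α' (Ideal.Quotient.mk I r) = Submodule.Quotient.mk (α r)) ∧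
      α' 0 = 0 ∧ α' 1 = 0 ∧
      (∀ x y : R, α' (Ideal.Quotient.mk I (x + y)) =
          α' (Ideal.Quotient.mk I x) + α' (Ideal.Quotient.mk I y) +
            cp p x y • (Submodule.Quotient.mk (α ((p : R))) :
              M ⧸ (I • (⊤ : Submodule R M)))) ∧
      (∀ x y : R, α' (Ideal.Quotient.mk I (x * y)) =
          x ^ p • α' (Ideal.Quotient.mk I y) + y ^ p • α' (Ideal.Quotient.mk I x)) := by
  have ⟨hzero, hone, hadd, hmul⟩ := hα
  refine ⟨hα.descend I hI, hα.descend_mk I hI, ?_, ?_, fun x y => ?_, fun x y => ?_⟩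
  · rw [← map_zero (Ideal.Quotient.mk I), hα.descend_mk, hzero, Submodule.Quotient.mk_zero]
  · rw [← map_one (Ideal.Quotient.mk I), hα.descend_mk, hone, Submodule.Quotient.mk_zero]
  · simp only [IsPerivation.descend_mk, hadd, Submodule.Quotient.mk_add,
      Submodule.Quotient.mk_smul]
  · simp only [IsPerivation.descend_mk, hmul, Submodule.Quotient.mk_add,
      Submodule.Quotient.mk_smul]

theorem perivation_descends {R M : Type*} [CommRing R] [AddCommGroup M] [Module R M]
    (p : ℕ) (hp : p.Prime) (hM : ∀ m : M, (p : R) • m = 0)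
    (α : R → M) (hα : IsPerivation p α) (I : Ideal R)
    (hI : ∀ a ∈ I, α a ∈ I • (⊤ : Submodule R M)) :
    ∃ α' : R ⧸ I → M ⧸ (I • (⊤ : Submodule R M)),
      (∀ r : R, α' (Ideal.Quotient.mk I r) = Submodule.Quotient.mk (α r)) ∧
      α' 0 = 0 ∧ α' 1 = 0 ∧
      (∀ x y : R, α' (Ideal.Quotient.mk I (x + y)) =
          α' (Ideal.Quotient.mk I x) + α' (Ideal.Quotient.mk I y) +
            cp p x y • (Submodule.Quotient.mk (α ((p : R))) :
              M ⧸ (I • (⊤ : Submodule R M)))) ∧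
      (∀ x y : R, α' (Ideal.Quotient.mk I (x * y)) =
          x ^ p • α' (Ideal.Quotient.mk I y) + y ^ p • α' (Ideal.Quotient.mk I x)) :=
  perivation_descends_general p α hα I hI
end

section
/- Let p be a prime, R a commutative ring, I an ideal, M an R/pR-module, and α : R → M a perivation. Then the induced map I/(I^2 + pI) → M/IM, [a] ↦ α(a) mod IM, is well-defined, additive, and p-linear over R/pR: for r ∈ R and a ∈ I, α(ra) ≡ r^p α(a) modulo IM. -/
/-!
The elements `c ∈ I` with `α c ∈ I • M` form an ideal of `R`: the error terms `C_p(x, y) • α p`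
and `c ^ p • α r` of the sum and product rules lie in `I • M` as soon as `y, c ∈ I`. This ideal
contains `I * I` by the product rule, and `p * I` because `p ^ p` kills `M`. Hence `α` is
well defined on `I / (I² + pI)`, and the same two error terms give additivity and `p`-linearity.
-/

lemma cp_mem_of_right {R : Type*} [CommRing R] (p : ℕ) {I : Ideal R} {x y : R}
    (hy : y ∈ I) : cp p x y ∈ I := by
  refine neg_mem (Ideal.sum_mem _ fun i hi => Ideal.mul_mem_left _ _ ?_)
  have : 0 < p - i := by simp only [Finset.mem_Ioo] at hi; omega
  exact Ideal.pow_mem_of_mem I hy _ this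

namespace IsPerivation

variable {R M : Type*} [CommRing R] [AddCommGroup M] [Module R M] {p : ℕ} {α : R → M}

lemma map_zero (hα : IsPerivation p α) : α 0 = 0 := hα.1

lemma map_add (hα : IsPerivation p α) (x y : R) :
    α (x + y) = α x + α y + cp p x y • α (p : R) :=
  hα.2.2.1 x y

lemma map_mul (hα : IsPerivation p α) (x y : R) : α (x * y) = x ^ p • α y + y ^ p • α x :=
  hα.2.2.2 x y

lemma map_add_sub_mem_smul_top (hα : IsPerivation p α) (I : Ideal R) (a : R) {b : R}
    (hb : b ∈ I) : α (a + b) - (α a + α b) ∈ I • (⊤ : Submodule R M) := by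
  rw [hα.map_add, add_sub_cancel_left]
  exact Submodule.smul_mem_smul (cp_mem_of_right p hb) trivial

lemma map_mul_sub_mem_smul_top (hα : IsPerivation p α) (hp : 0 < p) (I : Ideal R) (r : R)
    {a : R} (ha : a ∈ I) : α (r * a) - r ^ p • α a ∈ I • (⊤ : Submodule R M) := by
  rw [hα.map_mul, add_sub_cancel_left]
  exact Submodule.smul_mem_smul (Ideal.pow_mem_of_mem I ha _ hp) trivial

def kerMod (hα : IsPerivation p α) (hp : 0 < p) (I : Ideal R) : Ideal R where
  carrier := {c | c ∈ I ∧ α c ∈ I • (⊤ : Submodule R M)}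
  zero_mem' := ⟨I.zero_mem, by simp only [hα.map_zero, Submodule.zero_mem]⟩
  add_mem' := by
    rintro a b ⟨haI, haM⟩ ⟨hbI, hbM⟩
    refine ⟨I.add_mem haI hbI, ?_⟩
    convert add_mem (hα.map_add_sub_mem_smul_top I a hbI) (add_mem haM hbM) using 1
    abel
  smul_mem' := by
    rintro r c ⟨hcI, hcM⟩
    refine ⟨I.mul_mem_left r hcI, ?_⟩
    convert add_mem (hα.map_mul_sub_mem_smul_top hp I r hcI)
      (Submodule.smul_mem _ (r ^ p) hcM) using 1
    rw [smul_eq_mul, sub_add_cancel]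

lemma mul_add_span_mul_le_kerMod (hα : IsPerivation p α) (hp : 0 < p)
    (hM : ∀ m : M, (p : R) • m = 0) (I : Ideal R) :
    I * I + Ideal.span {(p : R)} * I ≤ hα.kerMod hp I := by
  refine sup_le (Ideal.mul_le.mpr fun a ha b hb => ?_)
    (Ideal.span_singleton_mul_le_iff.mpr fun b hb => ?_)
  · refine ⟨I.mul_mem_right b ha, ?_⟩
    rw [hα.map_mul]
    exact add_mem (Submodule.smul_mem_smul (Ideal.pow_mem_of_mem I ha _ hp) trivial)
      (Submodule.smul_mem_smul (Ideal.pow_mem_of_mem I hb _ hp) trivial)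
  · have hpow : (p : R) ^ p • α b = 0 := by
      rw [← pow_sub_one_mul hp.ne', mul_smul, hM, smul_zero]
    refine ⟨I.mul_mem_left _ hb, ?_⟩
    rw [hα.map_mul, hpow, zero_add]
    exact Submodule.smul_mem_smul (Ideal.pow_mem_of_mem I hb _ hp) trivial

end IsPerivation

theorem perivation_restriction_p_linear {R M : Type*} [CommRing R] [AddCommGroup M]
    [Module R M] (p : ℕ) (hp : p.Prime) (hM : ∀ m : M, (p : R) • m = 0)
    (α : R → M) (hα : IsPerivation p α) (I : Ideal R) :
    (∀ a b : R, a ∈ I → b ∈ I → a - b ∈ I * I + Ideal.span {(p : R)} * I →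
      (Submodule.Quotient.mk (α a) : M ⧸ (I • (⊤ : Submodule R M))) =
        Submodule.Quotient.mk (α b)) ∧
    (∀ a b : R, a ∈ I → b ∈ I →
      (Submodule.Quotient.mk (α (a + b)) : M ⧸ (I • (⊤ : Submodule R M))) =
        Submodule.Quotient.mk (α a) + Submodule.Quotient.mk (α b)) ∧
    (∀ (r : R), ∀ a ∈ I,
      (Submodule.Quotient.mk (α (r * a)) : M ⧸ (I • (⊤ : Submodule R M))) =
        r ^ p • Submodule.Quotient.mk (α a)) := by
  refine ⟨fun a b _ _ hab => ?_, fun a b _ hb => ?_, fun r a ha => ?_⟩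
  · obtain ⟨hcI, hcM⟩ := hα.mul_add_span_mul_le_kerMod hp.pos hM I hab
    have hsplit := hα.map_add_sub_mem_smul_top I b hcI
    rw [add_sub_cancel] at hsplit
    rw [Submodule.Quotient.eq]
    convert add_mem hsplit hcM using 1
    abel
  · rw [← Submodule.Quotient.mk_add, Submodule.Quotient.eq]
    exact hα.map_add_sub_mem_smul_top I a hb
  · rw [← Submodule.Quotient.mk_smul, Submodule.Quotient.eq]
    exact hα.map_mul_sub_mem_smul_top hp.pos I r ha
end
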